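/- Let A be a symmetric invertible 2n×2n real matrix, b(X,Y) = (AX,Y), and let g = ℝX_0 ⊕ ℝ^{2n} ⊕ ℝX_{n+1} be the solvable Lie algebra with bracket [(s,u,t),(s',u',t')] = (b(JAu,u'), t·JAu' − t'·JAu, 0). Then the symmetric bilinear form ⟨(s,u,t),(s',u',t')⟩ = b(u,u') + s t' + s' t is nondegenerate and ad-invariant on g: ⟨[Z,W],V⟩ + ⟨W,[Z,V]⟩ = 0 for all Z, W, V ∈ g. -/

import Mathlib

open Matrix

noncomputable section

/-- The canonical complex structure `J = [[0, -I],[I, 0]]` on `ℝ^{2n}`. -/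
def Jmat (n : ℕ) : Matrix (Fin n ⊕ Fin n) (Fin n ⊕ Fin n) ℝ :=
  Matrix.fromBlocks 0 (-1) 1 0

/-- The bilinear form `b(X,Y) = (AX, Y)` on `ℝ^{2n}`. -/
def bForm (n : ℕ) (A : Matrix (Fin n ⊕ Fin n) (Fin n ⊕ Fin n) ℝ)
    (X Y : (Fin n ⊕ Fin n) → ℝ) : ℝ :=
  (A *ᵥ X) ⬝ᵥ Y

/-- The bracket on `g = ℝX₀ ⊕ ℝ^{2n} ⊕ ℝX_{n+1}` (elements written `(s, u, t)`):
`[(s,u,t),(s',u',t')] = (b(JAu, u'), t·JAu' - t'·JAu, 0)`. -/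
def solvBr (n : ℕ) (A : Matrix (Fin n ⊕ Fin n) (Fin n ⊕ Fin n) ℝ)
    (Z W : ℝ × ((Fin n ⊕ Fin n) → ℝ) × ℝ) : ℝ × ((Fin n ⊕ Fin n) → ℝ) × ℝ :=
  (bForm n A ((Jmat n * A) *ᵥ Z.2.1) W.2.1,
   Z.2.2 • ((Jmat n * A) *ᵥ W.2.1) - W.2.2 • ((Jmat n * A) *ᵥ Z.2.1),
   0)

/-- The symmetric bilinear form `⟨(s,u,t),(s',u',t')⟩ = b(u,u') + s t' + s' t`
on `g = ℝX₀ ⊕ ℝ^{2n} ⊕ ℝX_{n+1}`. -/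
def solvMetric (n : ℕ) (A : Matrix (Fin n ⊕ Fin n) (Fin n ⊕ Fin n) ℝ)
    (Z W : ℝ × ((Fin n ⊕ Fin n) → ℝ) × ℝ) : ℝ :=
  bForm n A Z.2.1 W.2.1 + Z.1 * W.2.2 + W.1 * Z.2.2

section

variable {n : ℕ} {A : Matrix (Fin n ⊕ Fin n) (Fin n ⊕ Fin n) ℝ}

lemma Jmat_transpose : (Jmat n)ᵀ = -Jmat n := by
  simp [Jmat, fromBlocks_transpose, fromBlocks_neg]

lemma bForm_sub_left (X X' Y : Fin n ⊕ Fin n → ℝ) :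
    bForm n A (X - X') Y = bForm n A X Y - bForm n A X' Y := by
  simp only [bForm, mulVec_sub, sub_dotProduct]

lemma bForm_sub_right (X Y Y' : Fin n ⊕ Fin n → ℝ) :
    bForm n A X (Y - Y') = bForm n A X Y - bForm n A X Y' :=
  dotProduct_sub _ _ _

lemma bForm_smul_left (c : ℝ) (X Y : Fin n ⊕ Fin n → ℝ) :
    bForm n A (c • X) Y = c * bForm n A X Y := by
  simp only [bForm, mulVec_smul, smul_dotProduct, smul_eq_mul]

lemma bForm_smul_right (c : ℝ) (X Y : Fin n ⊕ Fin n → ℝ) :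
    bForm n A X (c • Y) = c * bForm n A X Y := by
  simp only [bForm, dotProduct_smul, smul_eq_mul]

lemma bForm_comm (hA : A.IsSymm) (X Y : Fin n ⊕ Fin n → ℝ) :
    bForm n A X Y = bForm n A Y X := by
  rw [bForm, bForm, dotProduct_comm, dotProduct_mulVec, ← mulVec_transpose, hA.eq]

/-- `JA` is skew-adjoint for `b`, since `(JA)ᵀ A = -A J A`. -/
lemma bForm_Jmat_mul_mulVec (hA : A.IsSymm) (X Y : Fin n ⊕ Fin n → ℝ) :
    bForm n A ((Jmat n * A) *ᵥ X) Y = -bForm n A X ((Jmat n * A) *ᵥ Y) := by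
  rw [bForm, bForm, dotProduct_mulVec, ← mulVec_transpose, transpose_mul, Jmat_transpose, hA.eq,
    mulVec_mulVec, mulVec_mulVec, mul_neg, neg_mul, neg_mulVec, neg_dotProduct, neg_neg,
    Matrix.mul_assoc]

lemma eq_zero_of_bForm_eq_zero (hA : IsUnit A) {X : Fin n ⊕ Fin n → ℝ}
    (h : ∀ Y, bForm n A X Y = 0) : X = 0 := by
  have hAX : A *ᵥ X = 0 := dotProduct_self_eq_zero.mp (h (A *ᵥ X))
  simpa using (mulVec_injective_iff_isUnit.mpr hA) (hAX.trans (mulVec_zero A).symm)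

lemma solvMetric_nondegenerate (hA : IsUnit A) (Z : ℝ × (Fin n ⊕ Fin n → ℝ) × ℝ)
    (h : ∀ W, solvMetric n A Z W = 0) : Z = 0 := by
  obtain ⟨s, u, t⟩ := Z
  have ht : t = 0 := by simpa [solvMetric, bForm] using h (1, 0, 0)
  have hs : s = 0 := by simpa [solvMetric, bForm] using h (0, 0, 1)
  have hu : u = 0 := eq_zero_of_bForm_eq_zero hA fun Y ↦ by simpa [solvMetric] using h (0, Y, 0)
  simp [hs, hu, ht]

/-- Expanding both terms, the `t`-part cancels by skew-adjointness of `JA` and the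
`t''`-part by symmetry of `b`. -/
lemma solvMetric_solvBr_add (hA : A.IsSymm) (Z W V : ℝ × (Fin n ⊕ Fin n → ℝ) × ℝ) :
    solvMetric n A (solvBr n A Z W) V + solvMetric n A W (solvBr n A Z V) = 0 := by
  obtain ⟨s, u, t⟩ := Z
  obtain ⟨s', u', t'⟩ := W
  obtain ⟨s'', u'', t''⟩ := V
  simp only [solvMetric, solvBr, bForm_sub_left, bForm_sub_right, bForm_smul_left,
    bForm_smul_right]
  rw [bForm_Jmat_mul_mulVec hA u', bForm_comm hA u' ((Jmat n * A) *ᵥ u)]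
  ring

end

/-- For `A` symmetric and invertible, the form
`⟨(s,u,t),(s',u',t')⟩ = b(u,u') + s t' + s' t` is nondegenerate and ad-invariant on the
solvable Lie algebra `g = ℝX₀ ⊕ ℝ^{2n} ⊕ ℝX_{n+1}`:
`⟨[Z,W],V⟩ + ⟨W,[Z,V]⟩ = 0`. -/
theorem solvable_metric_ad_invariant (n : ℕ)
    (A : Matrix (Fin n ⊕ Fin n) (Fin n ⊕ Fin n) ℝ)
    (hA : A.IsSymm) (hAinv : IsUnit A) :
    (∀ Z : ℝ × ((Fin n ⊕ Fin n) → ℝ) × ℝ,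
        (∀ W : ℝ × ((Fin n ⊕ Fin n) → ℝ) × ℝ, solvMetric n A Z W = 0) → Z = 0)
    ∧ (∀ Z W V : ℝ × ((Fin n ⊕ Fin n) → ℝ) × ℝ,
        solvMetric n A (solvBr n A Z W) V + solvMetric n A W (solvBr n A Z V) = 0) :=
  ⟨solvMetric_nondegenerate hAinv, solvMetric_solvBr_add hA⟩
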